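/- For k ≥ 1 and σ ∈ {0,1}^{k-1}, Trace([[1,0],[0,0]] · M_k(0,σ)) = h_{k-1}(σ) and Trace([[0,1],[0,0]] · M_k(0,σ)) = h_{k-1}(1-σ). -/
import Mathlib


open Matrix

namespace Farey

def A : Matrix (Fin 2) (Fin 2) ℤ := !![1, 0; 1, 1]
def B : Matrix (Fin 2) (Fin 2) ℤ := !![1, 1; 0, 1]

/-- The Farey spin chain matrix product: `M 0 = 1`,
`M (k+1) σ = A^(1-σ_(k+1)) B^(σ_(k+1)) * M k (σ_1,…,σ_k)`. -/
def M : (k : ℕ) → (Fin k → Bool) → Matrix (Fin 2) (Fin 2) ℤ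
  | 0, _ => 1
  | k + 1, σ => (if σ (Fin.last k) then B else A) * M k (fun i => σ i.castSucc)

/-- The canonical energy numerator of the number-theoretical spin chain:
`h 0 = 1`, `h (k+1) (σ, s) = h k σ + s * h k (1-σ)`. -/
def h : (k : ℕ) → (Fin k → Bool) → ℕ
  | 0, _ => 1
  | k + 1, σ =>
      h k (fun i => σ i.castSucc) +
        if σ (Fin.last k) then h k (fun i => !σ i.castSucc) else 0

lemma M_succ (k : ℕ) (σ : Fin (k + 1) → Bool) :
    M (k + 1) σ = (if σ (Fin.last k) then B else A) * M k (fun i => σ i.castSucc) := rfl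

/-- `Trace ([[1,0],[0,0]] * M_{k+1}(0,σ)) = h_k(σ)` and
`Trace ([[0,1],[0,0]] * M_{k+1}(0,σ)) = h_k(1-σ)`. -/
theorem trace_corner_M_cons (k : ℕ) (σ : Fin k → Bool) :
    ((!![1, 0; 0, 0] : Matrix (Fin 2) (Fin 2) ℤ) * M (k + 1) (Fin.cons false σ)).trace
        = (h k σ : ℤ) ∧
      ((!![0, 1; 0, 0] : Matrix (Fin 2) (Fin 2) ℤ) * M (k + 1) (Fin.cons false σ)).trace
        = (h k (fun i => !σ i) : ℤ) := by
  have key : ∀ (k : ℕ) (σ : Fin k → Bool),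
      (M (k + 1) (Fin.cons false σ)) 0 0 = (h k σ : ℤ) ∧
      (M (k + 1) (Fin.cons false σ)) 1 0 = (h k (fun i => !σ i) : ℤ) := by
    intro k
    induction k with
    | zero =>
      intro σ
      simp [M, h, A, Fin.cons, Matrix.mul_apply, Fin.sum_univ_two]
    | succ k ih =>
      intro σ
      have hcast : (fun i : Fin (k + 1) => (Fin.cons false σ : Fin (k + 2) → Bool) i.castSucc)
          = (Fin.cons false (fun i => σ i.castSucc) : Fin (k + 1) → Bool) := by
        funext i
        induction i using Fin.cases with
        | zero => rfl
        | succ j => rfl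
      have hlast : (Fin.cons false σ : Fin (k + 2) → Bool) (Fin.last (k + 1))
          = σ (Fin.last k) := by
        have : (Fin.last (k + 1) : Fin (k + 2)) = Fin.succ (Fin.last k) := rfl
        rw [this, Fin.cons_succ]
      obtain ⟨h1, h2⟩ := ih (fun i => σ i.castSucc)
      rw [M_succ, hcast, hlast]
      rcases hb : σ (Fin.last k) with _ | _
      · constructor
        · simp [A, Matrix.mul_apply, Fin.sum_univ_two, h1, h, hb]
        · simp [A, Matrix.mul_apply, Fin.sum_univ_two, h1, h2, h, hb]
          ring
      · constructor
        · simp [B, Matrix.mul_apply, Fin.sum_univ_two, h1, h2, h, hb]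
        · simp [B, Matrix.mul_apply, Fin.sum_univ_two, h2, h, hb]
  obtain ⟨h1, h2⟩ := key k σ
  constructor
  · simp [Matrix.trace, Matrix.diag, Matrix.mul_apply, Fin.sum_univ_two, h1]
  · simp [Matrix.trace, Matrix.diag, Matrix.mul_apply, Fin.sum_univ_two, h2]

end Farey
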